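/- Let K be a complete nonarchimedean field of characteristic 0 with residue characteristic p > 0, and let ρ > 1. Then for any f = Σ_k g_k t^k in the Tate algebra T_{n+1}(ρ) of power series converging on the closed polydisc of radius ρ (with variables x₁,…,x_n,t), the series Σ_k g_k/(k+1) converges in T_n(ρ); i.e. the formal integral ∫₀¹ f dt = Σ_k g_k/(k+1) defines a continuous K-linear map T_{n+1}(ρ) → T_n(ρ). -/

import Mathlib

/-!
On `ℚ` the norm of `K` is `|·|_p ^ c`, and `|m|_p ≥ 1/m`, so `‖1/(k+1)‖ ≤ (k+1)^c` grows only
polynomially and is therefore bounded by `C ρ^k` once `ρ > 1`. Hence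
`‖a_{ν,k}/(k+1)‖ ρ^{|ν|} ≤ C ‖a_{ν,k}‖ ρ^{|ν|+k}`. In a complete ultrametric field a series whose
terms tend to zero converges and its norm is at most the largest norm of a term; this gives the
convergence of each coefficient sum, its decay in `ν`, and the bound with constant `C`.
-/

open Filter

variable {K : Type*} [NontriviallyNormedField K]

/-- The degree `|ν|` of a multi-index. -/
def mdeg {n : ℕ} (ν : Fin n →₀ ℕ) : ℕ := ν.sum fun _ k => k

/-- The coefficient family `a : ν, k ↦ a_{ν,k}` (coefficient of `x^ν t^k`) represents an
element of the Tate algebra `T_{n+1}(ρ)` of power series converging on the closed polydisc of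
radius `ρ`:  `‖a_{ν,k}‖ ρ^{|ν|+k} → 0`. -/
def IsTateCoeff (n : ℕ) (ρ : ℝ) (a : (Fin n →₀ ℕ) → ℕ → K) : Prop :=
  Tendsto (fun z : (Fin n →₀ ℕ) × ℕ => ‖a z.1 z.2‖ * ρ ^ (mdeg z.1 + z.2))
    cofinite (nhds 0)

open Topology

lemma inv_padicNorm_natCast_le (p : ℕ) {m : ℕ} (hm : m ≠ 0) : (padicNorm p m)⁻¹ ≤ m := by
  have hm' : (m : ℚ) ≠ 0 := Nat.cast_ne_zero.2 hm
  rw [padicNorm.eq_zpow_of_nonzero hm', padicValRat.of_nat, zpow_neg, inv_inv, zpow_natCast]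
  exact_mod_cast Nat.le_of_dvd (Nat.pos_of_ne_zero hm) pow_padicValNat_dvd

lemma norm_natCast_inv_le_rpow {p : ℕ} {c : ℝ} (hc : 0 ≤ c)
    (hnorm : ∀ q : ℚ, ‖(q : K)‖ = (padicNorm p q : ℝ) ^ c) {m : ℕ} (hm : m ≠ 0) :
    ‖(m : K)⁻¹‖ ≤ (m : ℝ) ^ c := by
  have h := hnorm m
  rw [Rat.cast_natCast] at h
  have hnn : (0 : ℝ) ≤ padicNorm p m := by exact_mod_cast padicNorm.nonneg _
  rw [norm_inv, h, ← Real.inv_rpow hnn]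
  exact Real.rpow_le_rpow (inv_nonneg.2 hnn) (by exact_mod_cast inv_padicNorm_natCast_le p hm) hc

lemma exists_rpow_natCast_succ_le_mul_pow (c : ℝ) {ρ : ℝ} (hρ : 1 < ρ) :
    ∃ M, ∀ k : ℕ, ((k : ℝ) + 1) ^ c ≤ M * ρ ^ k := by
  obtain ⟨M, hM⟩ := ((tendsto_pow_const_div_const_pow_of_one_lt ⌈c⌉₊ hρ).comp
    (tendsto_add_atTop_nat 1)).bddAbove_range
  refine ⟨M * ρ, fun k => ?_⟩
  have hρ0 : 0 < ρ := zero_lt_one.trans hρ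
  calc ((k : ℝ) + 1) ^ c ≤ ((k : ℝ) + 1) ^ (⌈c⌉₊ : ℝ) :=
        Real.rpow_le_rpow_of_exponent_le (by simp) (Nat.le_ceil c)
    _ = ((k + 1 : ℕ) : ℝ) ^ ⌈c⌉₊ / ρ ^ (k + 1) * ρ ^ (k + 1) := by
        rw [Real.rpow_natCast, div_mul_cancel₀ _ (by positivity)]; push_cast; ring
    _ ≤ M * ρ ^ (k + 1) := by gcongr; exact hM ⟨k, rfl⟩
    _ = M * ρ * ρ ^ k := by ring

section WeightedSlices

variable {n : ℕ} {ρ C : ℝ} {w : ℕ → K} {a : (Fin n →₀ ℕ) → ℕ → K}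

lemma norm_mul_weight_mul_pow_le (hρ : 0 ≤ ρ) (hw : ∀ k, ‖w k‖ ≤ C * ρ ^ k)
    (ν : Fin n →₀ ℕ) (k : ℕ) :
    ‖a ν k * w k‖ * ρ ^ mdeg ν ≤ C * (‖a ν k‖ * ρ ^ (mdeg ν + k)) :=
  calc ‖a ν k * w k‖ * ρ ^ mdeg ν = ‖a ν k‖ * ρ ^ mdeg ν * ‖w k‖ := by rw [norm_mul]; ring
    _ ≤ ‖a ν k‖ * ρ ^ mdeg ν * (C * ρ ^ k) := by gcongr; exact hw k
    _ = C * (‖a ν k‖ * ρ ^ (mdeg ν + k)) := by ring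

lemma IsTateCoeff.tendsto_slice (ha : IsTateCoeff n ρ a) (ν : Fin n →₀ ℕ) :
    Tendsto (fun k => ‖a ν k‖ * ρ ^ (mdeg ν + k)) cofinite (𝓝 0) :=
  ha.comp (Prod.mk_right_injective ν).tendsto_cofinite

lemma IsTateCoeff.eventually_forall_lt (ha : IsTateCoeff n ρ a) {ε : ℝ} (hε : 0 < ε) :
    ∀ᶠ ν in cofinite, ∀ k, ‖a ν k‖ * ρ ^ (mdeg ν + k) < ε := by
  have hfin := ha.eventually (gt_mem_nhds hε)
  rw [eventually_cofinite] at hfin ⊢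
  refine (hfin.image Prod.fst).subset fun ν hν => ?_
  obtain ⟨k, hk⟩ := not_forall.1 hν
  exact ⟨(ν, k), hk, rfl⟩

variable [IsUltrametricDist K]

lemma norm_tsum_mul_weight_mul_pow_le (hρ : 0 < ρ) (hw : ∀ k, ‖w k‖ ≤ C * ρ ^ k)
    {ν : Fin n →₀ ℕ} {B : ℝ} (hB : ∀ k, ‖a ν k‖ * ρ ^ (mdeg ν + k) ≤ B) :
    ‖∑' k, a ν k * w k‖ * ρ ^ mdeg ν ≤ C * B := by
  have hC : 0 ≤ C := by simpa using (norm_nonneg _).trans (hw 0)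
  have hB0 : 0 ≤ B := (mul_nonneg (norm_nonneg _) (pow_nonneg hρ.le _)).trans (hB 0)
  rw [← le_div_iff₀ (by positivity)]
  refine IsUltrametricDist.norm_tsum_le_of_forall_le_of_nonneg (by positivity) fun k => ?_
  rw [le_div_iff₀ (by positivity)]
  exact (norm_mul_weight_mul_pow_le hρ.le hw ν k).trans (by gcongr; exact hB k)

lemma IsTateCoeff.summable_mul_weight [CompleteSpace K] (hρ : 0 < ρ)
    (hw : ∀ k, ‖w k‖ ≤ C * ρ ^ k) (ha : IsTateCoeff n ρ a) (ν : Fin n →₀ ℕ) :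
    Summable fun k => a ν k * w k := by
  refine NonarchimedeanAddGroup.summable_of_tendsto_cofinite_zero ?_
  rw [tendsto_zero_iff_norm_tendsto_zero]
  have hlim := ((ha.tendsto_slice ν).const_mul C).div_const (ρ ^ mdeg ν)
  rw [mul_zero, zero_div] at hlim
  refine squeeze_zero (fun k => norm_nonneg _) (fun k => ?_) hlim
  rw [le_div_iff₀ (by positivity)]
  exact norm_mul_weight_mul_pow_le hρ.le hw ν k

lemma IsTateCoeff.tendsto_norm_tsum_mul_weight (hρ : 0 < ρ) (hw : ∀ k, ‖w k‖ ≤ C * ρ ^ k)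
    (ha : IsTateCoeff n ρ a) :
    Tendsto (fun ν => ‖∑' k, a ν k * w k‖ * ρ ^ mdeg ν) cofinite (𝓝 0) := by
  have hC : 0 ≤ C := by simpa using (norm_nonneg _).trans (hw 0)
  refine Metric.tendsto_nhds.2 fun ε hε => ?_
  filter_upwards [ha.eventually_forall_lt (show 0 < ε / (C + 1) by positivity)] with ν hν
  rw [Real.dist_0_eq_abs, abs_of_nonneg (by positivity)]
  calc ‖∑' k, a ν k * w k‖ * ρ ^ mdeg ν ≤ C * (ε / (C + 1)) :=
        norm_tsum_mul_weight_mul_pow_le hρ hw fun k => (hν k).le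
    _ < ε := by rw [← mul_div_assoc, div_lt_iff₀ (by positivity)]; linarith

lemma IsTateCoeff.iSup_norm_tsum_mul_weight_le (hρ : 0 < ρ) (hw : ∀ k, ‖w k‖ ≤ C * ρ ^ k)
    (ha : IsTateCoeff n ρ a) :
    (⨆ ν, ‖∑' k, a ν k * w k‖ * ρ ^ mdeg ν) ≤
      C * ⨆ z : (Fin n →₀ ℕ) × ℕ, ‖a z.1 z.2‖ * ρ ^ (mdeg z.1 + z.2) :=
  ciSup_le fun ν => norm_tsum_mul_weight_mul_pow_le hρ hw fun k =>
    le_ciSup ha.bddAbove_range_of_cofinite (ν, k)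

end WeightedSlices

theorem tate_formal_integral_general [CompleteSpace K] [IsUltrametricDist K]
    (hval : ∃ p : ℕ, p.Prime ∧ ∃ c : ℝ, 0 < c ∧
      ∀ q : ℚ, ‖(q : K)‖ = ((padicNorm p q : ℝ)) ^ c)
    (n : ℕ) {ρ : ℝ} (hρ : 1 < ρ) :
    ∃ C : ℝ, 0 < C ∧
      ∃ I : ((Fin n →₀ ℕ) → ℕ → K) → ((Fin n →₀ ℕ) → K),
        (∀ a, IsTateCoeff n ρ a →
          (∀ ν, HasSum (fun k : ℕ => a ν k * ((k : K) + 1)⁻¹) (I a ν)) ∧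
          Tendsto (fun ν => ‖I a ν‖ * ρ ^ mdeg ν) cofinite (nhds 0) ∧
          (⨆ ν, ‖I a ν‖ * ρ ^ mdeg ν) ≤
            C * ⨆ z : (Fin n →₀ ℕ) × ℕ, ‖a z.1 z.2‖ * ρ ^ (mdeg z.1 + z.2)) ∧
        (∀ a b, IsTateCoeff n ρ a → IsTateCoeff n ρ b → I (a + b) = I a + I b) ∧
        (∀ (c : K) a, IsTateCoeff n ρ a →
          I (fun ν k => c * a ν k) = fun ν => c * I a ν) := by
  obtain ⟨p, -, c, hc, hnorm⟩ := hval
  obtain ⟨M, hM⟩ := exists_rpow_natCast_succ_le_mul_pow c hρ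
  have hw (k : ℕ) : ‖((k : K) + 1)⁻¹‖ ≤ M * ρ ^ k := by
    have h := norm_natCast_inv_le_rpow hc.le hnorm k.succ_ne_zero
    push_cast at h
    exact h.trans (hM k)
  have hM1 : 1 ≤ M := by simpa using hw 0
  have hρ0 : 0 < ρ := zero_lt_one.trans hρ
  refine ⟨M, zero_lt_one.trans_le hM1, fun a ν => ∑' k, a ν k * ((k : K) + 1)⁻¹,
    fun a ha => ⟨fun ν => (ha.summable_mul_weight hρ0 hw ν).hasSum,
      ha.tendsto_norm_tsum_mul_weight hρ0 hw, ha.iSup_norm_tsum_mul_weight_le hρ0 hw⟩, ?_, ?_⟩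
  · intro a b ha hb
    funext ν
    simp only [Pi.add_apply, add_mul]
    exact (ha.summable_mul_weight hρ0 hw ν).tsum_add (hb.summable_mul_weight hρ0 hw ν)
  · intro c a _
    funext ν
    simp only [mul_assoc]
    exact tsum_mul_left

/-- Let `K` be a complete nonarchimedean field of characteristic `0` with residue
characteristic `p > 0` (the valuation restricts on `ℚ` to a power of the `p`-adic one), and
let `ρ > 1`.  For `f = Σ_k g_k t^k ∈ T_{n+1}(ρ)` the series `Σ_k g_k/(k+1)` converges in
`T_n(ρ)`: coefficientwise the sums `Σ_k a_{ν,k}/(k+1)` converge, the resulting coefficient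
family again satisfies the `T_n(ρ)` condition, and the formal integral
`∫₀¹ f dt = Σ_k g_k/(k+1)` defines a continuous (bounded, with a uniform constant `C`)
`K`-linear map `T_{n+1}(ρ) → T_n(ρ)`. -/
theorem tate_formal_integral [CompleteSpace K] [IsUltrametricDist K] [CharZero K]
    (hval : ∃ p : ℕ, p.Prime ∧ ∃ c : ℝ, 0 < c ∧
      ∀ q : ℚ, ‖(q : K)‖ = ((padicNorm p q : ℝ)) ^ c)
    (n : ℕ) {ρ : ℝ} (hρ : 1 < ρ) :
    ∃ C : ℝ, 0 < C ∧
      ∃ I : ((Fin n →₀ ℕ) → ℕ → K) → ((Fin n →₀ ℕ) → K),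
        (∀ a, IsTateCoeff n ρ a →
          (∀ ν, HasSum (fun k : ℕ => a ν k * ((k : K) + 1)⁻¹) (I a ν)) ∧
          Tendsto (fun ν => ‖I a ν‖ * ρ ^ mdeg ν) cofinite (nhds 0) ∧
          (⨆ ν, ‖I a ν‖ * ρ ^ mdeg ν) ≤
            C * ⨆ z : (Fin n →₀ ℕ) × ℕ, ‖a z.1 z.2‖ * ρ ^ (mdeg z.1 + z.2)) ∧
        (∀ a b, IsTateCoeff n ρ a → IsTateCoeff n ρ b → I (a + b) = I a + I b) ∧
        (∀ (c : K) a, IsTateCoeff n ρ a →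
          I (fun ν k => c * a ν k) = fun ν => c * I a ν) :=
  tate_formal_integral_general hval n hρ
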